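/- arXiv:2006.00041 — 2 statements merged into one kernel-verified Lean document; each statement's English description precedes it below -/
import Mathlib

section
/- Let Γ be the cone over a regular graph with sink at the cone point, reduced Laplacian L', and degree vector d on non-sink vertices. If σ ∈ ℤ^{V'} satisfies σ ≥ 0 and σ = L'a for some integral vector a with a ≥ d − 1, then the ℝ-odometer of σ equals a − d + 1; in particular σ is immutable (its ℝ-odometer is integral and equals its ℤ-odometer). -/
open Matrix

noncomputable section

/-- A finite multigraph without self-loops: each edge `e` has a head and a tail. -/
structure Multigraph where
  V : Type
  E : Type
  fintypeV : Fintype V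
  decEqV : DecidableEq V
  fintypeE : Fintype E
  decEqE : DecidableEq E
  head : E → V
  tail : E → V
  loopless : ∀ e, head e ≠ tail e

namespace Multigraph

variable (G : Multigraph)

instance : Fintype G.V := G.fintypeV
instance : DecidableEq G.V := G.decEqV
instance : Fintype G.E := G.fintypeE
instance : DecidableEq G.E := G.decEqE

/-- `v` and `w` are joined by some edge belonging to `F`. -/
def edgeRel (F : Finset G.E) (v w : G.V) : Prop :=
  ∃ e ∈ F, (G.head e = v ∧ G.tail e = w) ∨ (G.head e = w ∧ G.tail e = v)

/-- Reachability using only edges in `F`. -/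
def Reach (F : Finset G.E) : G.V → G.V → Prop :=
  Relation.EqvGen (G.edgeRel F)

/-- The multigraph is connected. -/
def Connected : Prop := ∀ v w : G.V, G.Reach Finset.univ v w

/-- The number of edges joining `v` and `w`. -/
def edgeCount (v w : G.V) : ℕ :=
  Nat.card {e : G.E // (G.head e = v ∧ G.tail e = w) ∨ (G.head e = w ∧ G.tail e = v)}

/-- The degree of a vertex. -/
def degree (v : G.V) : ℕ :=
  Nat.card {e : G.E // G.head e = v ∨ G.tail e = v}

/-- The Laplacian matrix of the multigraph. -/
def laplacian : Matrix G.V G.V ℤ :=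
  Matrix.of fun v w => if v = w then (G.degree v : ℤ) else -(G.edgeCount v w : ℤ)

/-- The reduced Laplacian: delete the row and column of the sink `s`. -/
def reducedLaplacian (s : G.V) : Matrix {v : G.V // v ≠ s} {v : G.V // v ≠ s} ℤ :=
  Matrix.of fun v w => G.laplacian v.1 w.1

/-- A spanning tree, seen as a set of edges: it connects all vertices and has
`|V| - 1` edges. -/
def IsSpanningTree (T : Finset G.E) : Prop :=
  (∀ v w : G.V, G.Reach T v w) ∧ T.card + 1 = Fintype.card G.V

/-- The number of connected components of the spanning subgraph with edge set `F`. -/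
def numComponents (F : Finset G.E) : ℕ :=
  Nat.card (Quotient (Relation.EqvGen.setoid (G.edgeRel F)))

/-- `F` is the edge set of a spanning forest: the number of connected components of
`(V, F)` equals `|V| - |F|` (i.e. `F` is acyclic). -/
def IsForest (F : Finset G.E) : Prop :=
  G.numComponents F + F.card = Fintype.card G.V

end Multigraph

/-!
Subtracting `d - 1` reduces everything to a minimum principle. The reduced Laplacian `L'` has
non-positive off-diagonal entries, and on the cone each of its rows sums to `1` (the single edge
to the sink), so `L' x ≥ 0` forces `x ≥ 0`: at a minimal coordinate `x_m` one gets
`0 ≤ (L' x)_m ≤ x_m`. On a regular cone `L'(d - 1) = d - 1`, hence `u = a - d + 1` solves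
`σ - L' u = d - 1` with equality, and every `w` with `σ - L' w ≤ d - 1` satisfies
`L' (w - u) ≥ 0`, i.e. `u ≤ w`.
-/

section MinimumPrinciple

variable {ι R : Type*} [Fintype ι] [Field R] [LinearOrder R] [IsStrictOrderedRing R]

theorem Matrix.nonneg_of_mulVec_nonneg {A : Matrix ι ι R}
    (hoff : ∀ i j, i ≠ j → A i j ≤ 0) (hrow : ∀ i, 0 < ∑ j, A i j)
    {x : ι → R} (hx : 0 ≤ A *ᵥ x) : 0 ≤ x := by
  intro i
  obtain ⟨m, -, hm⟩ := Finset.univ.exists_min_image x ⟨i, Finset.mem_univ i⟩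
  have hAm : (A *ᵥ x) m ≤ (∑ j, A m j) * x m := by
    rw [Finset.sum_mul]
    refine Finset.sum_le_sum fun j _ => ?_
    rcases eq_or_ne m j with rfl | hj
    · exact le_rfl
    · exact mul_le_mul_of_nonpos_left (hm j (Finset.mem_univ j)) (hoff m j hj)
  have hm0 : 0 ≤ x m := nonneg_of_mul_nonneg_right (hx m |>.trans hAm) (hrow m)
  exact hm0.trans (hm i (Finset.mem_univ i))

theorem Matrix.le_of_sub_mulVec_le {A : Matrix ι ι R}
    (hoff : ∀ i j, i ≠ j → A i j ≤ 0) (hrow : ∀ i, 0 < ∑ j, A i j)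
    {σ c u w : ι → R} (hu : σ - A *ᵥ u = c) (hw : σ - A *ᵥ w ≤ c) : u ≤ w := by
  have hwu : 0 ≤ A *ᵥ (w - u) := by
    intro i
    have hwi := hw i
    rw [← hu] at hwi
    simp only [Matrix.mulVec_sub, Pi.sub_apply, Pi.zero_apply] at hwi ⊢
    linarith
  simpa using Matrix.nonneg_of_mulVec_nonneg hoff hrow hwu

end MinimumPrinciple

namespace Multigraph

variable (G : Multigraph)

open Finset

theorem edgeCount_eq (v w : G.V) :
    G.edgeCount v w = #{e | G.head e = v ∧ G.tail e = w} + #{e | G.head e = w ∧ G.tail e = v} := by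
  rw [edgeCount, Nat.card_eq_fintype_card, Fintype.card_subtype, filter_or,
    card_union_of_disjoint]
  refine disjoint_filter.2 fun e _ h h' => G.loopless e ?_
  rw [h.1, h'.2]

theorem degree_eq (v : G.V) : G.degree v = #{e | G.head e = v} + #{e | G.tail e = v} := by
  rw [degree, Nat.card_eq_fintype_card, Fintype.card_subtype, filter_or,
    card_union_of_disjoint]
  exact disjoint_filter.2 fun e _ h h' => G.loopless e (h.trans h'.symm)

theorem edgeCount_self (v : G.V) : G.edgeCount v v = 0 := by
  have hloop : #{e | G.head e = v ∧ G.tail e = v} = 0 :=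
    card_eq_zero.2 (filter_eq_empty_iff.2 fun e _ h => G.loopless e (h.1.trans h.2.symm))
  rw [edgeCount_eq, hloop]

theorem sum_edgeCount (v : G.V) : ∑ w, G.edgeCount v w = G.degree v := by
  have hfib (p : G.E → G.V) (q : G.E → G.V) :
      ∑ w, #{e | p e = v ∧ q e = w} = #{e | p e = v} := by
    rw [card_eq_sum_card_fiberwise (f := q) (t := univ) fun _ _ => mem_univ _]
    simp only [filter_filter]
  simp only [edgeCount_eq, sum_add_distrib, degree_eq, hfib G.head G.tail]
  congr 1
  simpa only [and_comm] using hfib G.tail G.head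

theorem laplacian_apply (v w : G.V) :
    G.laplacian v w = (if v = w then (G.degree v : ℤ) else 0) - G.edgeCount v w := by
  by_cases h : v = w
  · subst h; simp [laplacian, edgeCount_self]
  · simp [laplacian, h]

theorem sum_laplacian_row (v : G.V) : ∑ w, G.laplacian v w = 0 := by
  simp [laplacian_apply, sum_sub_distrib, ← Nat.cast_sum, sum_edgeCount]

theorem reducedLaplacian_apply_nonpos {s : G.V} {v w : {v : G.V // v ≠ s}} (h : v ≠ w) :
    G.reducedLaplacian s v w ≤ 0 := by
  simp [reducedLaplacian, laplacian_apply, Subtype.val_injective.ne h]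

theorem sum_reducedLaplacian_row (s : G.V) (v : {v : G.V // v ≠ s}) :
    ∑ w, G.reducedLaplacian s v w = G.edgeCount v s := by
  have hrow := G.sum_laplacian_row v
  rw [← sum_erase_add _ _ (mem_univ s), sum_subtype (univ.erase s) (p := (· ≠ s)) (by simp)]
    at hrow
  rw [laplacian_apply, if_neg v.2, zero_sub, add_neg_eq_zero] at hrow
  exact hrow

theorem reducedLaplacian_mulVec_const (s : G.V) (c : ℤ) :
    G.reducedLaplacian s *ᵥ (fun _ => c) =
      fun v : {v : G.V // v ≠ s} => (G.edgeCount v.1 s : ℤ) * c := by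
  funext v
  simp only [mulVec, dotProduct, ← sum_mul, sum_reducedLaplacian_row]

theorem reducedLaplacian_mulVec_degree_sub_one {s : G.V}
    (hcone : ∀ v : G.V, v ≠ s → G.edgeCount v s = 1)
    (hreg : ∃ k : ℕ, ∀ v : G.V, v ≠ s → G.degree v = k + 1) :
    G.reducedLaplacian s *ᵥ (fun v => (G.degree v.1 : ℤ) - 1) =
      fun v => (G.degree v.1 : ℤ) - 1 := by
  obtain ⟨k, hk⟩ := hreg
  have hconst : (fun v : {v : G.V // v ≠ s} => (G.degree v.1 : ℤ) - 1) = fun _ => (k : ℤ) := by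
    funext v
    simp [hk v.1 v.2]
  rw [hconst, reducedLaplacian_mulVec_const]
  funext v
  simp [hcone v.1 v.2]

end Multigraph

theorem cone_odometer_eq_general
    (G : Multigraph) (s : G.V)
    (hcone : ∀ v : G.V, v ≠ s → G.edgeCount v s = 1)
    (hreg : ∃ k : ℕ, ∀ v : G.V, v ≠ s → G.degree v = k + 1)
    (σ a : {v : G.V // v ≠ s} → ℤ)
    (ha : ∀ v : {v : G.V // v ≠ s}, (G.degree v.1 : ℤ) - 1 ≤ a v)
    (hσa : (G.reducedLaplacian s).mulVec a = σ) :
    letI A : Matrix {v : G.V // v ≠ s} {v : G.V // v ≠ s} ℝ :=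
      (G.reducedLaplacian s).map ((↑) : ℤ → ℝ)
    letI u : {v : G.V // v ≠ s} → ℝ := fun v => ((a v - (G.degree v.1 : ℤ) + 1 : ℤ) : ℝ)
    ((∀ v, 0 ≤ u v) ∧
        (∀ v, (σ v : ℝ) - A.mulVec u v ≤ (G.degree v.1 : ℝ) - 1)) ∧
      (∀ w : {v : G.V // v ≠ s} → ℝ,
        (∀ v, 0 ≤ w v) →
        (∀ v, (σ v : ℝ) - A.mulVec w v ≤ (G.degree v.1 : ℝ) - 1) →
        ∀ v, u v ≤ w v) ∧
      (∀ w : {v : G.V // v ≠ s} → ℝ, (∀ v, ∃ m : ℤ, w v = (m : ℝ)) →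
        (∀ v, 0 ≤ w v) →
        (∀ v, (σ v : ℝ) - A.mulVec w v ≤ (G.degree v.1 : ℝ) - 1) →
        ∀ v, u v ≤ w v) := by
  set A : Matrix {v : G.V // v ≠ s} {v : G.V // v ≠ s} ℝ := (G.reducedLaplacian s).map (↑)
  set u : {v : G.V // v ≠ s} → ℝ := fun v => ((a v - (G.degree v.1 : ℤ) + 1 : ℤ) : ℝ)
  have hLu : G.reducedLaplacian s *ᵥ (fun v => a v - (G.degree v.1 : ℤ) + 1) =
      σ - fun v => (G.degree v.1 : ℤ) - 1 := by
    rw [show (fun v => a v - (G.degree v.1 : ℤ) + 1) = a - fun v => (G.degree v.1 : ℤ) - 1 by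
      funext v; simp only [Pi.sub_apply]; ring, mulVec_sub, hσa,
      G.reducedLaplacian_mulVec_degree_sub_one hcone hreg]
  have hAu : (fun v => (σ v : ℝ)) - A *ᵥ u = fun v => (G.degree v.1 : ℝ) - 1 := by
    funext v
    have hcast : (A *ᵥ u) v =
        ((G.reducedLaplacian s *ᵥ fun v => a v - (G.degree v.1 : ℤ) + 1) v : ℤ) :=
      (RingHom.map_mulVec (Int.castRingHom ℝ) _ _ v).symm
    rw [Pi.sub_apply, hcast, hLu, Pi.sub_apply]
    push_cast
    ring
  have hoff : ∀ i j, i ≠ j → A i j ≤ 0 := fun i j h =>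
    Int.cast_nonpos.2 (G.reducedLaplacian_apply_nonpos h)
  have hrow : ∀ i, 0 < ∑ j, A i j := fun i => by
    simp [A, ← Int.cast_sum, G.sum_reducedLaplacian_row, hcone i.1 i.2]
  have hmin : ∀ w : {v : G.V // v ≠ s} → ℝ,
      (∀ v, (σ v : ℝ) - (A *ᵥ w) v ≤ (G.degree v.1 : ℝ) - 1) → ∀ v, u v ≤ w v :=
    fun w hw => Matrix.le_of_sub_mulVec_le hoff hrow hAu hw
  refine ⟨⟨fun v => ?_, fun v => (congrFun hAu v).le⟩, fun w _ => hmin w, fun w _ _ => hmin w⟩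
  exact Int.cast_nonneg (by linarith [ha v])

/-- On the cone over a regular graph with sink at the cone point, if `σ ≥ 0` and
`σ = L'a` for an integral `a ≥ d - 1`, then the `ℝ`-odometer of `σ` is `a - d + 1`:
it is a non-negative solution of `σ - L'u ≤ d - 1`, minimal among all real solutions
and (being integral) among all integral solutions; hence `σ` is immutable. -/
theorem cone_odometer_eq
    (G : Multigraph) (hG : G.Connected) (s : G.V)
    (hcone : ∀ v : G.V, v ≠ s → G.edgeCount v s = 1)
    (hreg : ∃ k : ℕ, ∀ v : G.V, v ≠ s → G.degree v = k + 1)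
    (σ a : {v : G.V // v ≠ s} → ℤ)
    (hσ0 : ∀ v, 0 ≤ σ v)
    (ha : ∀ v : {v : G.V // v ≠ s}, (G.degree v.1 : ℤ) - 1 ≤ a v)
    (hσa : (G.reducedLaplacian s).mulVec a = σ) :
    letI A : Matrix {v : G.V // v ≠ s} {v : G.V // v ≠ s} ℝ :=
      (G.reducedLaplacian s).map ((↑) : ℤ → ℝ)
    letI u : {v : G.V // v ≠ s} → ℝ := fun v => ((a v - (G.degree v.1 : ℤ) + 1 : ℤ) : ℝ)
    ((∀ v, 0 ≤ u v) ∧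
        (∀ v, (σ v : ℝ) - A.mulVec u v ≤ (G.degree v.1 : ℝ) - 1)) ∧
      (∀ w : {v : G.V // v ≠ s} → ℝ,
        (∀ v, 0 ≤ w v) →
        (∀ v, (σ v : ℝ) - A.mulVec w v ≤ (G.degree v.1 : ℝ) - 1) →
        ∀ v, u v ≤ w v) ∧
      (∀ w : {v : G.V // v ≠ s} → ℝ, (∀ v, ∃ m : ℤ, w v = (m : ℝ)) →
        (∀ v, 0 ≤ w v) →
        (∀ v, (σ v : ℝ) - A.mulVec w v ≤ (G.degree v.1 : ℝ) - 1) →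
        ∀ v, u v ≤ w v) :=
  cone_odometer_eq_general G s hcone hreg σ a ha hσa
end
end

section
/- Let Γ be a tree (finite, connected, acyclic simple graph) with any vertex chosen as sink. Then every uniformly large sandpile σ (i.e., σ ≥ d − 1 componentwise on the non-sink vertices) is immutable: its ℝ-odometer equals its ℤ-odometer, and both equal (L')^{-1}(σ − d + 1), which is an integer vector. -/
open Matrix

noncomputable section

/-!
Write `L' = C Cᵀ`, where `C` is the incidence matrix with the sink row deleted; for a tree it is
square. Every column of `C` has at most one `1` and at most one `-1`, so `C` is totally
unimodular and `det C = ±1` as soon as it is nonzero, whence `det L' = 1` and `L'⁻¹` is integral.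
The discrete maximum principle on a connected graph makes `L'` inverse-positive; this gives
`det L' ≠ 0`, the bound `u = L'⁻¹(σ - d + 1) ≥ 0` from `σ ≥ d - 1`, and the minimality of `u`:
if `σ - L' w ≤ d - 1` then `L' (w - u) ≥ 0`, so `w ≥ u`.
-/

namespace Matrix

variable {m n m' n' R : Type*} [CommRing R]

/-- The sign pattern of the incidence matrix of a directed graph with some rows deleted. -/
structure IsPartialIncidence (A : Matrix m n R) : Prop where
  entry_eq : ∀ i j, A i j = 0 ∨ A i j = 1 ∨ A i j = -1
  subsingleton_one : ∀ j, {i | A i j = 1}.Subsingleton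
  subsingleton_neg_one : ∀ j, {i | A i j = -1}.Subsingleton

theorem IsPartialIncidence.submatrix {A : Matrix m n R} (hA : A.IsPartialIncidence)
    {f : m' → m} (hf : f.Injective) (g : n' → n) : (A.submatrix f g).IsPartialIncidence where
  entry_eq i j := hA.entry_eq (f i) (g j)
  subsingleton_one j _ hi _ hi' := hf (hA.subsingleton_one (g j) hi hi')
  subsingleton_neg_one j _ hi _ hi' := hf (hA.subsingleton_neg_one (g j) hi hi')

theorem IsPartialIncidence.sum_col_eq_zero [Fintype m] {A : Matrix m n R}
    (hA : A.IsPartialIncidence) {i i' : m} {j : n} (hii' : i ≠ i') (hi : A i j ≠ 0)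
    (hi' : A i' j ≠ 0) : ∑ k, A k j = 0 := by
  have of_one_neg_one {p q : m} (hpq : p ≠ q) (hp : A p j = 1) (hq : A q j = -1) :
      ∑ k, A k j = 0 := by
    rw [Fintype.sum_eq_add p q hpq fun k ⟨hkp, hkq⟩ => ?_, hp, hq, add_neg_cancel]
    rcases hA.entry_eq k j with h | h | h
    · exact h
    · exact absurd (hA.subsingleton_one j h hp) hkp
    · exact absurd (hA.subsingleton_neg_one j h hq) hkq
  rcases hA.entry_eq i j with h | h | h
  · exact absurd h hi
  · rcases hA.entry_eq i' j with h' | h' | h'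
    · exact absurd h' hi'
    · exact absurd (hA.subsingleton_one j h h') hii'
    · exact of_one_neg_one hii' h h'
  · rcases hA.entry_eq i' j with h' | h' | h'
    · exact absurd h' hi'
    · exact of_one_neg_one hii'.symm h' h
    · exact absurd (hA.subsingleton_neg_one j h h') hii'

theorem IsPartialIncidence.det_mem_range_signType_cast {k : ℕ}
    {A : Matrix (Fin k) (Fin k) R} (hA : A.IsPartialIncidence) :
    A.det ∈ Set.range SignType.cast := by
  induction k with
  | zero => exact ⟨1, by simp⟩
  | succ k ih =>
    by_cases hsparse : ∃ j i, ∀ i' ≠ i, A i' j = 0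
    · obtain ⟨j, i, hcol⟩ := hsparse
      rw [det_succ_column A j, Finset.sum_eq_single i
        (fun i' _ hi' => by rw [hcol i' hi', mul_zero, zero_mul]) (by simp)]
      obtain ⟨a, ha⟩ := ih (hA.submatrix (Fin.succAbove_right_injective (p := i)) j.succAbove)
      obtain ⟨b, hb⟩ : A i j ∈ Set.range SignType.cast := by
        rcases hA.entry_eq i j with h | h | h
        exacts [⟨0, h.symm⟩, ⟨1, h.symm⟩, ⟨-1, by simp [h]⟩]
      exact ⟨(-1) ^ (i + j : ℕ) * b * a, by simp [ha, hb]⟩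
    · push Not at hsparse
      have hcol (j : Fin (k + 1)) : ∑ i, A i j = 0 := by
        obtain ⟨i, -, hi⟩ := hsparse j 0
        obtain ⟨i', hi'i, hi'⟩ := hsparse j i
        exact hA.sum_col_eq_zero hi'i.symm hi hi'
      refine ⟨0, ?_⟩
      rw [det_eq_sum_column_mul_submatrix_succAbove_succAbove_det A 0 0 fun j _ => hcol j,
        hcol, mul_zero, zero_mul, SignType.coe_zero]

theorem IsPartialIncidence.isTotallyUnimodular {A : Matrix m n R}
    (hA : A.IsPartialIncidence) : A.IsTotallyUnimodular :=
  fun _ _ _ hf _ => (hA.submatrix hf _).det_mem_range_signType_cast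

theorem map_nonsing_inv {S : Type*} [CommRing S] [Fintype n] [DecidableEq n] (f : R →+* S)
    {A : Matrix n n R} (h : IsUnit A.det) : (A.map f)⁻¹ = A⁻¹.map f :=
  inv_eq_right_inv <| by
    rw [← Matrix.map_mul, mul_nonsing_inv _ h, Matrix.map_one _ f.map_zero f.map_one]

variable {K : Type*} [Field K] [LinearOrder K] [IsStrictOrderedRing K]

/-- Collatz's monotone matrices, equivalently those with an entrywise nonnegative inverse. -/
def IsInversePositive [Fintype n] (A : Matrix n n K) : Prop :=
  ∀ x, 0 ≤ A *ᵥ x → 0 ≤ x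

variable [Fintype n] [DecidableEq n] {A : Matrix n n K}

theorem IsInversePositive.det_ne_zero (hA : A.IsInversePositive) : A.det ≠ 0 := by
  intro h
  obtain ⟨x, hx, hAx⟩ := exists_mulVec_eq_zero_iff.2 h
  refine hx (le_antisymm ?_ (hA x hAx.ge))
  exact neg_nonneg.1 (hA (-x) (by rw [mulVec_neg, hAx, neg_zero]))

theorem IsInversePositive.isLeast_inv_mulVec (hA : A.IsInversePositive) {σ c : n → K}
    (hσ : c ≤ σ) : IsLeast {w | 0 ≤ w ∧ σ - A *ᵥ w ≤ c} (A⁻¹ *ᵥ (σ - c)) := by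
  have hu : A *ᵥ (A⁻¹ *ᵥ (σ - c)) = σ - c := by
    rw [mulVec_mulVec, mul_nonsing_inv _ (isUnit_iff_ne_zero.2 hA.det_ne_zero), one_mulVec]
  refine ⟨⟨hA _ (by rw [hu]; exact sub_nonneg.2 hσ), by rw [hu, sub_sub_cancel]⟩,
    fun w ⟨_, hw⟩ => ?_⟩
  rw [← sub_nonneg]
  exact hA _ (by rw [mulVec_sub, hu, sub_nonneg]; exact sub_le_comm.1 hw)

end Matrix

namespace Multigraph

variable (G : Multigraph)

def incidence : Matrix G.V G.E ℤ :=
  Matrix.of fun v e => if G.head e = v then 1 else if G.tail e = v then -1 else 0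

variable {G}

theorem incidence_eq_one_iff {v : G.V} {e : G.E} : G.incidence v e = 1 ↔ G.head e = v := by
  simp only [incidence, of_apply]
  split_ifs <;> simp_all

theorem incidence_eq_neg_one_iff {v : G.V} {e : G.E} :
    G.incidence v e = -1 ↔ G.tail e = v := by
  have := G.loopless e
  simp only [incidence, of_apply]
  split_ifs <;> grind

theorem incidence_eq_zero {v : G.V} {e : G.E} (hh : G.head e ≠ v) (ht : G.tail e ≠ v) :
    G.incidence v e = 0 := by
  simp [incidence, hh, ht]

variable (G)

theorem incidence_isPartialIncidence : G.incidence.IsPartialIncidence where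
  entry_eq v e := by
    by_cases hh : G.head e = v
    · exact .inr (.inl (incidence_eq_one_iff.2 hh))
    by_cases ht : G.tail e = v
    · exact .inr (.inr (incidence_eq_neg_one_iff.2 ht))
    · exact .inl (incidence_eq_zero hh ht)
  subsingleton_one e _ hv _ hw :=
    (incidence_eq_one_iff.1 hv).symm.trans (incidence_eq_one_iff.1 hw)
  subsingleton_neg_one e _ hv _ hw :=
    (incidence_eq_neg_one_iff.1 hv).symm.trans (incidence_eq_neg_one_iff.1 hw)

theorem laplacian_eq_incidence_mul_transpose :
    G.laplacian = G.incidence * G.incidenceᵀ := by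
  ext v w
  simp only [laplacian, degree, edgeCount, of_apply, mul_apply, transpose_apply,
    Nat.card_eq_fintype_card, Fintype.card_subtype, Finset.card_filter]
  split_ifs with hvw
  · subst hvw
    push_cast
    refine Finset.sum_congr rfl fun e _ => ?_
    have := G.loopless e
    by_cases h1 : G.head e = v <;> by_cases h2 : G.tail e = v <;> simp_all [incidence]
  · push_cast
    rw [← Finset.sum_neg_distrib]
    refine Finset.sum_congr rfl fun e _ => ?_
    have := G.loopless e
    by_cases h1 : G.head e = v <;> by_cases h2 : G.tail e = w <;>
      by_cases h3 : G.head e = w <;> by_cases h4 : G.tail e = v <;> simp_all [incidence]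

theorem sum_mul_incidence {R : Type*} [CommRing R] (f : G.V → R) (e : G.E) :
    ∑ v, f v * G.incidence v e = f (G.head e) - f (G.tail e) := by
  rw [Fintype.sum_eq_add _ _ (G.loopless e) fun v ⟨hh, ht⟩ => ?_,
    incidence_eq_one_iff.2 rfl, incidence_eq_neg_one_iff.2 rfl]
  · push_cast
    ring
  · rw [incidence_eq_zero (Ne.symm hh) (Ne.symm ht), Int.cast_zero, mul_zero]

theorem laplacian_mulVec_apply {R : Type*} [CommRing R] (f : G.V → R) (v : G.V) :
    (G.laplacian.map ((↑) : ℤ → R) *ᵥ f) v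
      = ∑ e, G.incidence v e * (f (G.head e) - f (G.tail e)) := by
  rw [laplacian_eq_incidence_mul_transpose]
  simp only [mulVec, dotProduct, map_apply, mul_apply, transpose_apply, Int.cast_sum,
    Int.cast_mul, Finset.sum_mul]
  rw [Finset.sum_comm]
  refine Finset.sum_congr rfl fun e _ => ?_
  rw [← sum_mul_incidence, Finset.mul_sum]
  exact Finset.sum_congr rfl fun w _ => by ring

theorem reducedLaplacian_mulVec_apply {R : Type*} [CommRing R] (s : G.V)
    (x : {v : G.V // v ≠ s} → R) (v : {v : G.V // v ≠ s}) :
    ((G.reducedLaplacian s).map ((↑) : ℤ → R) *ᵥ x) v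
      = (G.laplacian.map ((↑) : ℤ → R) *ᵥ Function.extend Subtype.val x 0) v := by
  simp only [mulVec, dotProduct, map_apply, reducedLaplacian, of_apply]
  rw [Fintype.sum_eq_add_sum_subtype_ne _ s, Function.extend_apply' _ _ _ (by simp),
    Pi.zero_apply, mul_zero, zero_add]
  simp only [Subtype.val_injective.extend_apply]

variable {G}

theorem Reach.iff_of_forall_edge {F : Finset G.E} {P : G.V → Prop}
    (hP : ∀ e ∈ F, (P (G.head e) ↔ P (G.tail e))) {v w : G.V} (h : G.Reach F v w) :
    P v ↔ P w := by
  induction h with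
  | rel a b hab =>
    obtain ⟨e, he, ⟨rfl, rfl⟩ | ⟨rfl, rfl⟩⟩ := hab
    exacts [hP e he, (hP e he).symm]
  | refl => rfl
  | symm _ _ _ ih => exact ih.symm
  | trans _ _ _ _ _ ih₁ ih₂ => exact ih₁.trans ih₂

variable {K : Type*} [Field K] [LinearOrder K] [IsStrictOrderedRing K]

theorem head_eq_tail_of_isMin_of_laplacian_mulVec_nonneg {f : G.V → K} {v : G.V}
    (hmin : ∀ w, f v ≤ f w) (hv : 0 ≤ (G.laplacian.map ((↑) : ℤ → K) *ᵥ f) v) {e : G.E}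
    (he : G.head e = v ∨ G.tail e = v) : f (G.head e) = f (G.tail e) := by
  have hterm : ∀ e' ∈ Finset.univ,
      (G.incidence v e' : K) * (f (G.head e') - f (G.tail e')) ≤ 0 := by
    intro e' _
    by_cases hh : G.head e' = v
    · rw [incidence_eq_one_iff.2 hh, hh, Int.cast_one, one_mul]
      linarith [hmin (G.tail e')]
    by_cases ht : G.tail e' = v
    · rw [incidence_eq_neg_one_iff.2 ht, ht, Int.cast_neg, Int.cast_one, neg_one_mul]
      linarith [hmin (G.head e')]
    · simp [incidence_eq_zero hh ht]
  rw [laplacian_mulVec_apply] at hv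
  have hzero := (Finset.sum_eq_zero_iff_of_nonpos hterm).1
    (le_antisymm (Finset.sum_nonpos hterm) hv) e (Finset.mem_univ e)
  rcases he with hh | ht
  · rw [incidence_eq_one_iff.2 hh, Int.cast_one, one_mul] at hzero
    linarith
  · rw [incidence_eq_neg_one_iff.2 ht, Int.cast_neg, Int.cast_one, neg_one_mul] at hzero
    linarith

theorem nonneg_of_laplacian_mulVec_nonneg (hG : G.Connected) {s : G.V} {f : G.V → K}
    (hs : f s = 0) (hf : ∀ v ≠ s, 0 ≤ (G.laplacian.map ((↑) : ℤ → K) *ᵥ f) v) : 0 ≤ f := by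
  -- A minimum point is not the sink, so the minimum spreads along every edge up to the sink.
  by_contra hneg
  obtain ⟨v, hv⟩ : ∃ v, f v < 0 := by simpa [Pi.le_def] using hneg
  have : Nonempty G.V := ⟨v⟩
  obtain ⟨m, hm⟩ := Finite.exists_min f
  have hms : f m < f s := by linarith [hm v]
  have hclosed : ∀ e ∈ Finset.univ, (f (G.head e) = f m ↔ f (G.tail e) = f m) := by
    intro e _
    have hflat {w : G.V} (hw : f w = f m) (he : G.head e = w ∨ G.tail e = w) :
        f (G.head e) = f (G.tail e) :=
      head_eq_tail_of_isMin_of_laplacian_mulVec_nonneg (hw ▸ hm)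
        (hf w fun hws => hms.ne (hws ▸ hw).symm) he
    constructor
    · intro h; rw [← hflat h (.inl rfl), h]
    · intro h; rw [hflat h (.inr rfl), h]
  exact hms.ne
    ((Reach.iff_of_forall_edge (P := fun w => f w = f m) hclosed (hG m s)).1 rfl).symm

variable (G)

theorem isInversePositive_reducedLaplacian (hG : G.Connected) (s : G.V) :
    ((G.reducedLaplacian s).map ((↑) : ℤ → K)).IsInversePositive := by
  intro x hx v
  have hext := nonneg_of_laplacian_mulVec_nonneg hG (s := s)
    (f := Function.extend Subtype.val x 0) (Function.extend_apply' _ _ _ (by simp))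
    fun w hw => by
      have := hx ⟨w, hw⟩
      rwa [Pi.zero_apply, reducedLaplacian_mulVec_apply] at this
  have := hext v
  rwa [Pi.zero_apply, Subtype.val_injective.extend_apply] at this

theorem det_reducedLaplacian_eq_one (hG : G.Connected)
    (htree : Fintype.card G.E + 1 = Fintype.card G.V) (s : G.V) :
    (G.reducedLaplacian s).det = 1 := by
  have hcard : Fintype.card {v // v ≠ s} = Fintype.card G.E := by
    rw [Fintype.card_subtype_compl, Fintype.card_subtype_eq]
    omega
  let e : {v // v ≠ s} ≃ G.E := Fintype.equivOfCardEq hcard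
  let C : Matrix {v // v ≠ s} {v // v ≠ s} ℤ := G.incidence.submatrix Subtype.val e
  have hL : G.reducedLaplacian s = C * Cᵀ := by
    ext v w
    simp only [C, reducedLaplacian, of_apply, laplacian_eq_incidence_mul_transpose, mul_apply,
      transpose_apply, submatrix_apply]
    exact (e.sum_comp _).symm
  obtain ⟨c, hc⟩ := (isTotallyUnimodular_iff_fintype _).1
    G.incidence_isPartialIncidence.isTotallyUnimodular _ Subtype.val e
  have hne : (G.reducedLaplacian s).det ≠ 0 := by
    have := (G.isInversePositive_reducedLaplacian (K := ℚ) hG s).det_ne_zero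
    rwa [show (G.reducedLaplacian s).map ((↑) : ℤ → ℚ)
      = (Int.castRingHom ℚ).mapMatrix (G.reducedLaplacian s) from rfl, ← RingHom.map_det,
      eq_intCast, Int.cast_ne_zero] at this
  have hC : C.det = c := hc.symm
  rw [hL, det_mul, det_transpose, hC] at hne ⊢
  rcases c with _ | _ | _ <;> simp at hne ⊢

end Multigraph

theorem tree_uniformly_large_immutable_general
    (G : Multigraph) (hG : G.Connected)
    (htree : Fintype.card G.E + 1 = Fintype.card G.V)
    (s : G.V)
    (σ : {v : G.V // v ≠ s} → ℤ)
    (hσ : ∀ v : {v : G.V // v ≠ s}, (G.degree v.1 : ℤ) - 1 ≤ σ v) :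
    letI A : Matrix {v : G.V // v ≠ s} {v : G.V // v ≠ s} ℝ :=
      (G.reducedLaplacian s).map ((↑) : ℤ → ℝ)
    letI u : {v : G.V // v ≠ s} → ℝ :=
      A⁻¹.mulVec fun v => (σ v : ℝ) - (G.degree v.1 : ℝ) + 1
    (∀ v, ∃ m : ℤ, u v = (m : ℝ)) ∧
      ((∀ v, 0 ≤ u v) ∧
        (∀ v, (σ v : ℝ) - A.mulVec u v ≤ (G.degree v.1 : ℝ) - 1)) ∧
      (∀ w : {v : G.V // v ≠ s} → ℝ,
        (∀ v, 0 ≤ w v) →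
        (∀ v, (σ v : ℝ) - A.mulVec w v ≤ (G.degree v.1 : ℝ) - 1) →
        ∀ v, u v ≤ w v) ∧
      (∀ w : {v : G.V // v ≠ s} → ℝ, (∀ v, ∃ m : ℤ, w v = (m : ℝ)) →
        (∀ v, 0 ≤ w v) →
        (∀ v, (σ v : ℝ) - A.mulVec w v ≤ (G.degree v.1 : ℝ) - 1) →
        ∀ v, u v ≤ w v) := by
  have hunit : IsUnit (G.reducedLaplacian s).det := by
    rw [G.det_reducedLaplacian_eq_one hG htree s]
    exact isUnit_one
  have hodometer := (G.isInversePositive_reducedLaplacian (K := ℝ) hG s).isLeast_inv_mulVec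
    (σ := fun v => (σ v : ℝ)) (c := fun v => (G.degree v.1 : ℝ) - 1)
    fun v => show (G.degree v.1 : ℝ) - 1 ≤ σ v by exact_mod_cast hσ v
  rw [show ((fun v => (σ v : ℝ)) - fun v => (G.degree v.1 : ℝ) - 1)
    = fun v => (σ v : ℝ) - G.degree v.1 + 1 by ext v; simp only [Pi.sub_apply]; ring] at hodometer
  refine ⟨fun v => ⟨((G.reducedLaplacian s)⁻¹ *ᵥ fun v => σ v - G.degree v.1 + 1) v, ?_⟩,
    ⟨hodometer.1.1, hodometer.1.2⟩, fun w hw hw' => hodometer.2 ⟨hw, hw'⟩,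
    fun w _ hw hw' => hodometer.2 ⟨hw, hw'⟩⟩
  have hinv : ((G.reducedLaplacian s).map ((↑) : ℤ → ℝ))⁻¹
      = (G.reducedLaplacian s)⁻¹.map (↑) := map_nonsing_inv (Int.castRingHom ℝ) hunit
  rw [hinv]
  simp only [mulVec, dotProduct, map_apply]
  push_cast
  rfl

/-- On a tree (connected with `|E| + 1 = |V|`, simple: at most one edge between any
two vertices), every uniformly large sandpile is immutable: `(L')⁻¹(σ - d + 1)` is
an integer vector and is simultaneously the `ℝ`-odometer and the `ℤ`-odometer of
`σ`. -/
theorem tree_uniformly_large_immutable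
    (G : Multigraph) (hG : G.Connected)
    (htree : Fintype.card G.E + 1 = Fintype.card G.V)
    (hsimple : ∀ v w : G.V, G.edgeCount v w ≤ 1)
    (s : G.V)
    (σ : {v : G.V // v ≠ s} → ℤ)
    (hσ : ∀ v : {v : G.V // v ≠ s}, (G.degree v.1 : ℤ) - 1 ≤ σ v) :
    letI A : Matrix {v : G.V // v ≠ s} {v : G.V // v ≠ s} ℝ :=
      (G.reducedLaplacian s).map ((↑) : ℤ → ℝ)
    letI u : {v : G.V // v ≠ s} → ℝ :=
      A⁻¹.mulVec fun v => (σ v : ℝ) - (G.degree v.1 : ℝ) + 1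
    (∀ v, ∃ m : ℤ, u v = (m : ℝ)) ∧
      ((∀ v, 0 ≤ u v) ∧
        (∀ v, (σ v : ℝ) - A.mulVec u v ≤ (G.degree v.1 : ℝ) - 1)) ∧
      (∀ w : {v : G.V // v ≠ s} → ℝ,
        (∀ v, 0 ≤ w v) →
        (∀ v, (σ v : ℝ) - A.mulVec w v ≤ (G.degree v.1 : ℝ) - 1) →
        ∀ v, u v ≤ w v) ∧
      (∀ w : {v : G.V // v ≠ s} → ℝ, (∀ v, ∃ m : ℤ, w v = (m : ℝ)) →
        (∀ v, 0 ≤ w v) →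
        (∀ v, (σ v : ℝ) - A.mulVec w v ≤ (G.degree v.1 : ℝ) - 1) →
        ∀ v, u v ≤ w v) :=
  tree_uniformly_large_immutable_general G hG htree s σ hσ
end
end
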